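/- arXiv:1801.04783 — 4 statements merged into one kernel-verified Lean document; each statement's English description precedes it below -/
import Mathlib

section
/- Let q, q' ∈ [0,1) and set b = q'(1−q)/(1−qq'). Let G be a geometric random variable on {1,2,…} with P[G = v] = (q')^{v−1}(1−q') for all v ≥ 1, and conditionally on G let Z have the Binomial(G−1, 1−q) distribution. Then Z has the law of a geometric random variable with parameter 1−b minus one; that is, P[Z = v] = (1−b)·b^{v} for every v ∈ ℕ. -/
/-!
Conditioning on `G - 1 = n`, the mass of `Z` at `k` is
`(1 - q') q'^n · C(n, k) (1 - q)^k q^(n - k)`. Pulling out `(1 - q') (q' (1 - q))^k` leaves the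
negative binomial series `∑ₙ C(n, k) (q q')^(n - k) = (1 - q q')^(-(k + 1))`, which is exactly
`(1 - b) b^k`.
-/

open MeasureTheory ProbabilityTheory
open scoped ENNReal NNReal

set_option linter.deprecated false

lemma hasSum_choose_mul_pow_sub {𝕜 : Type*} [NormedField 𝕜] [CompleteSpace 𝕜] {x : 𝕜}
    (hx : ‖x‖ < 1) (k : ℕ) :
    HasSum (fun n ↦ (n.choose k : 𝕜) * x ^ (n - k)) (1 / (1 - x) ^ (k + 1)) := by
  have h_head : ∑ n ∈ Finset.range k, (n.choose k : 𝕜) * x ^ (n - k) = 0 :=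
    Finset.sum_eq_zero fun n hn ↦ by
      rw [Nat.choose_eq_zero_of_lt (Finset.mem_range.mp hn), Nat.cast_zero, zero_mul]
  refine (hasSum_nat_add_iff' k).mp ?_
  simpa only [h_head, sub_zero, Nat.add_sub_cancel] using
    hasSum_choose_mul_geometric_of_norm_lt_one k hx

lemma PMF.binomial_map_val_apply (p : ℝ≥0) (h : p ≤ 1) (n k : ℕ) :
    (PMF.binomial p h n).map Fin.val k = ↑(p ^ k * (1 - p) ^ (n - k) * n.choose k) := by
  rw [PMF.map_apply]
  by_cases hkn : k ≤ n
  · refine (tsum_eq_single ⟨k, Nat.lt_succ_of_le hkn⟩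
      fun i hi ↦ if_neg fun hk ↦ hi (Fin.ext hk.symm)).trans ?_
    simp [PMF.binomial_apply, Fin.val_last]
  · rw [Nat.choose_eq_zero_of_lt (not_le.mp hkn), Nat.cast_zero, mul_zero, ENNReal.coe_zero]
    exact ENNReal.tsum_eq_zero.mpr fun i ↦ if_neg fun (hk : k = i) ↦ hkn (hk ▸ i.is_le)

lemma geometricPMF_apply {r : ℝ} (hr : 0 < r) (hr1 : r ≤ 1) (n : ℕ) :
    geometricPMF hr hr1 n = ENNReal.ofReal ((1 - r) ^ n * r) :=
  rfl

theorem geometricPMF_bind_binomial_apply {r : ℝ} (hr : 0 < r) (hr1 : r ≤ 1) {p : ℝ≥0}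
    (hp : p ≤ 1) (k : ℕ) :
    (geometricPMF hr hr1).bind (fun n ↦ (PMF.binomial p hp n).map Fin.val) k
      = ENNReal.ofReal (r * ((1 - r) * p) ^ k / (1 - (1 - r) * (1 - p)) ^ (k + 1)) := by
  set x : ℝ := (1 - r) * (1 - p)
  have hp1 : (0 : ℝ) ≤ 1 - p := sub_nonneg.mpr (by exact_mod_cast hp)
  have hx0 : 0 ≤ x := mul_nonneg (by linarith) hp1
  have hx : ‖x‖ < 1 := by
    rw [Real.norm_of_nonneg hx0]
    nlinarith [p.coe_nonneg]
  have h_term : ∀ n, geometricPMF hr hr1 n * (PMF.binomial p hp n).map Fin.val k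
      = ENNReal.ofReal (r * ((1 - r) * p) ^ k * ((n.choose k : ℝ) * x ^ (n - k))) := by
    intro n
    rw [PMF.binomial_map_val_apply, ← ENNReal.ofReal_coe_nnreal, geometricPMF_apply,
      ← ENNReal.ofReal_mul (by positivity)]
    congr 1
    push_cast [hp]
    rcases le_or_gt k n with hkn | hkn
    · obtain ⟨m, rfl⟩ := Nat.exists_eq_add_of_le hkn
      rw [Nat.add_sub_cancel_left, mul_pow, mul_pow]
      ring
    · simp [Nat.choose_eq_zero_of_lt hkn]
  have h_sum := (hasSum_choose_mul_pow_sub hx k).mul_left (r * ((1 - r) * p) ^ k)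
  rw [PMF.bind_apply, tsum_congr h_term,
    ← ENNReal.ofReal_tsum_of_nonneg (fun n ↦ by positivity) h_sum.summable, h_sum.tsum_eq,
    mul_one_div]

/-- `geometricPMF hpos hle` is the law of `G - 1`: its mass at `n` is `q'^n (1 - q') = P[G = n + 1]`. -/
theorem geometric_binomial_mixture_general
    (q q' : ℝ) (hq1 : q < 1)
    (hpos : 0 < 1 - q') (hle : 1 - q' ≤ 1) (hbin : ENNReal.ofReal (1 - q) ≤ 1)
    (b : ℝ) (hb : b = q' * (1 - q) / (1 - q * q')) :
    ∀ v : ℕ,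
      ((ProbabilityTheory.geometricPMF hpos hle).bind
        (fun n => (PMF.binomial (Real.toNNReal (1 - q)) (ENNReal.coe_le_one_iff.mp hbin) n).map Fin.val)) v
      = ENNReal.ofReal ((1 - b) * b ^ v) := by
  intro v
  have hq0 : 0 ≤ q := by linarith [ENNReal.ofReal_le_one.mp hbin]
  have hden : 1 - q' * q ≠ 0 := by nlinarith
  have h1b : 1 - b = (1 - q') / (1 - q' * q) := by
    rw [hb, mul_comm q, eq_div_iff hden, sub_mul, div_mul_cancel₀ _ hden]
    ring
  rw [geometricPMF_bind_binomial_apply, Real.coe_toNNReal _ (by linarith)]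
  simp only [sub_sub_cancel]
  rw [h1b, hb, div_pow, pow_succ, mul_comm q]
  congr 1
  field_simp

/-- computation inside Lemma 2.1 of the paper.
Let `q, q' ∈ [0,1)` and `b = q'(1−q)/(1−qq')`.  Let `G` be geometric on `{1,2,…}`
with `P[G = v] = q'^{v−1}(1−q')`, and conditionally on `G` let `Z` be
`Binomial(G−1, 1−q)`.  Then `Z` is distributed as a geometric random variable of
parameter `1−b`, minus one: `P[Z = v] = (1−b)·b^v` for all `v ∈ ℕ`.
(Here `G − 1` is modelled directly by `geometricPMF (1−q')`, whose value at `n`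
is `q'^n (1−q') = P[G = n+1]`.) -/
theorem geometric_binomial_mixture
    (q q' : ℝ) (hq0 : 0 ≤ q) (hq1 : q < 1) (hq'0 : 0 ≤ q') (hq'1 : q' < 1)
    (hpos : 0 < 1 - q') (hle : 1 - q' ≤ 1) (hbin : ENNReal.ofReal (1 - q) ≤ 1)
    (b : ℝ) (hb : b = q' * (1 - q) / (1 - q * q')) :
    ∀ v : ℕ,
      ((ProbabilityTheory.geometricPMF hpos hle).bind
        (fun n => (PMF.binomial (Real.toNNReal (1 - q)) (ENNReal.coe_le_one_iff.mp hbin) n).map Fin.val)) v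
      = ENNReal.ofReal ((1 - b) * b ^ v) :=
  geometric_binomial_mixture_general q q' hq1 hpos hle hbin b hb
end

section
/- Let q, q' ∈ [0,1), p = 1−q, p' = 1−q', φ_1(w) = pw + q, φ_2(w) = p'w/(1 − q'w), and Ψ = φ_1^{−1}∘φ_2^{−1}. There is a constant c_2 ∈ (0, 1/20) depending only on q and q' such that for all sufficiently large L the following holds with ρ = 1 − 1/L²: if z ∈ ℂ satisfies |z| = 1 and |arg(z)| ≤ c_2/L, and w = Ψ(ρ·z), then |w| ≤ 1 − c_2/L². -/
/-! With `u = (1 - q)(1 - q')`, `Ψ(w) = ((1 - qq')w - q(1 - q')) / ((1 - q)(1 - q' + q'w))`, and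
for every `w` the Julia-type identity
`|(1 - q)(1 - q' + q'w)|² - |(1 - qq')w - q(1 - q')|² = 2u(1 - Re w) - α|1 - w|²`
holds with `α = (1 - qq')² - ((1 - q)q')² ≤ 1`. For `w = ρz` with `|z| = 1` the gain
`2u(1 - Re w) ≥ 2u(1 - ρ) = 2u/L²` is linear in `1/L²`, while the loss is at most
`(1 - ρ + |arg z|)² ≤ (2c/L)²`; taking `c = u/40` leaves room for the factor `(1 - c/L²)²`. -/

open Complex

noncomputable def moebiusPsi (q q' : ℝ) (w : ℂ) : ℂ :=
  (w / ((1 - (q' : ℂ)) + (q' : ℂ) * w) - (q : ℂ)) / (1 - (q : ℂ))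

section

variable {q q' : ℝ}

lemma moebiusPsi_eq_div {w : ℂ} (hD : (1 - (q' : ℂ)) + q' * w ≠ 0) :
    moebiusPsi q q' w = ((1 - q * q') * w - q * (1 - q')) / ((1 - q) * ((1 - q') + q' * w)) := by
  rw [moebiusPsi, div_sub' hD, div_div, mul_comm _ (1 - (q : ℂ))]
  ring

lemma normSq_moebius_denom_sub_num (q q' : ℝ) (w : ℂ) :
    normSq ((1 - q) * ((1 - q') + q' * w)) - normSq ((1 - q * q') * w - q * (1 - q'))
      = 2 * ((1 - q) * (1 - q')) * (1 - w.re)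
        - ((1 - q * q') ^ 2 - ((1 - q) * q') ^ 2) * normSq (1 - w) := by
  simp only [normSq_apply, mul_re, mul_im, sub_re, sub_im, add_re, add_im, ofReal_re, ofReal_im,
    one_re, one_im]
  ring

lemma norm_moebius_denom_le_one (hq0 : 0 ≤ q) (hq1 : q ≤ 1) (hq'0 : 0 ≤ q') (hq'1 : q' ≤ 1)
    {w : ℂ} (hw : ‖w‖ ≤ 1) : ‖(1 - q : ℂ) * ((1 - q') + q' * w)‖ ≤ 1 := by
  have h1q : ‖(1 - q : ℂ)‖ = 1 - q := by
    rw [← ofReal_one, ← ofReal_sub, norm_real, Real.norm_of_nonneg (by linarith)]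
  have h1q' : ‖(1 - q' : ℂ)‖ = 1 - q' := by
    rw [← ofReal_one, ← ofReal_sub, norm_real, Real.norm_of_nonneg (by linarith)]
  calc ‖(1 - q : ℂ) * ((1 - q') + q' * w)‖
      ≤ (1 - q) * ((1 - q') + q' * ‖w‖) := by
        rw [norm_mul, h1q]
        refine mul_le_mul_of_nonneg_left ((norm_add_le _ _).trans ?_) (by linarith)
        rw [h1q', norm_mul, norm_real, Real.norm_of_nonneg hq'0]
    _ ≤ 1 := by nlinarith [mul_le_mul_of_nonneg_left hw hq'0]

lemma norm_moebiusPsi_le (hq0 : 0 ≤ q) (hq1 : q ≤ 1) (hq'0 : 0 ≤ q') (hq'1 : q' < 1)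
    {w : ℂ} {t : ℝ} (hw : ‖w‖ ≤ 1) (hw_re : 0 ≤ w.re) (ht0 : 0 ≤ t) (ht1 : t ≤ 1)
    (h : 1 - t ^ 2 ≤ 2 * ((1 - q) * (1 - q')) * (1 - w.re) - ‖1 - w‖ ^ 2) :
    ‖moebiusPsi q q' w‖ ≤ t := by
  have hD : (1 - (q' : ℂ)) + q' * w ≠ 0 := by
    intro h0
    have h0re := congrArg re h0
    simp only [add_re, sub_re, one_re, ofReal_re, mul_re, ofReal_im, zero_mul, sub_zero,
      zero_re] at h0re
    nlinarith
  rw [moebiusPsi_eq_div hD, norm_div]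
  refine div_le_of_le_mul₀ (norm_nonneg _) ht0 ?_
  have hden := norm_moebius_denom_le_one hq0 hq1 hq'0 hq'1.le hw
  have hα : (1 - q * q') ^ 2 - ((1 - q) * q') ^ 2 ≤ 1 := by
    nlinarith [mul_nonneg hq0 hq'0, mul_le_one₀ hq1 hq'0 hq'1.le, sq_nonneg ((1 - q) * q')]
  have hsq : ‖((1 - q * q') * w - q * (1 - q') : ℂ)‖ ^ 2
      ≤ (t * ‖(1 - q : ℂ) * ((1 - q') + q' * w)‖) ^ 2 := by
    have hid := normSq_moebius_denom_sub_num q q' w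
    rw [← Complex.sq_norm, ← Complex.sq_norm, ← Complex.sq_norm] at hid
    have hden2 : ‖(1 - q : ℂ) * ((1 - q') + q' * w)‖ ^ 2 ≤ 1 := pow_le_one₀ (norm_nonneg _) hden
    have ht2 : 0 ≤ 1 - t ^ 2 := sub_nonneg.2 (pow_le_one₀ ht0 ht1)
    nlinarith [mul_le_mul_of_nonneg_right hα (sq_nonneg ‖1 - w‖),
      mul_le_mul_of_nonneg_left hden2 ht2]
  exact (pow_le_pow_iff_left₀ (norm_nonneg _) (by positivity) two_ne_zero).1 hsq

lemma norm_one_sub_le_abs_arg {z : ℂ} (hz : ‖z‖ = 1) : ‖1 - z‖ ≤ |arg z| := by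
  have hexp : cexp (I * arg z) = z := by simpa [hz, mul_comm] using norm_mul_exp_arg_mul_I z
  calc ‖1 - z‖ = ‖cexp (I * arg z) - 1‖ := by rw [hexp, norm_sub_rev]
    _ ≤ ‖arg z‖ := Real.norm_exp_I_mul_ofReal_sub_one_le
    _ = |arg z| := Real.norm_eq_abs _

lemma norm_one_sub_ofReal_mul_le {ρ : ℝ} (hρ0 : 0 ≤ ρ) (hρ1 : ρ ≤ 1) {z : ℂ} (hz : ‖z‖ = 1) :
    ‖1 - ρ * z‖ ≤ (1 - ρ) + |arg z| := by
  have hsplit : (1 - ρ * z : ℂ) = (1 - ρ : ℝ) + ρ * (1 - z) := by push_cast; ring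
  calc ‖1 - ρ * z‖ ≤ ‖((1 - ρ : ℝ) : ℂ)‖ + ‖(ρ : ℂ)‖ * ‖1 - z‖ := by
        rw [hsplit, ← norm_mul]; exact norm_add_le _ _
    _ ≤ (1 - ρ) + |arg z| := by
        rw [norm_real, norm_real, Real.norm_of_nonneg (by linarith), Real.norm_of_nonneg hρ0]
        gcongr
        exact (mul_le_of_le_one_left (norm_nonneg _) hρ1).trans (norm_one_sub_le_abs_arg hz)

lemma norm_moebiusPsi_ofReal_mul_le (hq0 : 0 ≤ q) (hq1 : q ≤ 1) (hq'0 : 0 ≤ q') (hq'1 : q' < 1)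
    {c e : ℝ} (hc : 40 * c ≤ (1 - q) * (1 - q')) (he0 : 0 ≤ e) (hec : e ≤ c)
    {z : ℂ} (hz : ‖z‖ = 1) (harg : |arg z| ≤ c * e) :
    ‖moebiusPsi q q' ((1 - e ^ 2 : ℝ) * z)‖ ≤ 1 - c * e ^ 2 := by
  have hc1 : c ≤ 1 / 40 := by nlinarith [mul_le_one₀ hq1 hq'0 hq'1.le, mul_nonneg hq0 hq'0]
  set ρ : ℝ := 1 - e ^ 2
  have hρ0 : 0 ≤ ρ := by nlinarith
  have hρ1 : ρ ≤ 1 := by nlinarith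
  have hnorm : ‖(ρ : ℂ) * z‖ = ρ := by
    rw [norm_mul, hz, mul_one, norm_real, Real.norm_of_nonneg hρ0]
  have hnear : ‖1 - ρ * z‖ ≤ 2 * c * e := by
    have := norm_one_sub_ofReal_mul_le hρ0 hρ1 hz
    nlinarith
  have hre_le : ((ρ : ℂ) * z).re ≤ ρ := (re_le_norm _).trans hnorm.le
  have hre_ge : 1 - ‖1 - ρ * z‖ ≤ ((ρ : ℂ) * z).re := by
    have := re_le_norm (1 - (ρ : ℂ) * z)
    rw [sub_re, one_re] at this
    linarith
  refine norm_moebiusPsi_le hq0 hq1 hq'0 hq'1 (hnorm.trans_le hρ1) (by nlinarith)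
    (by nlinarith) (by nlinarith) ?_
  calc 1 - (1 - c * e ^ 2) ^ 2 ≤ 2 * c * e ^ 2 := by nlinarith [sq_nonneg (c * e ^ 2)]
    _ ≤ 2 * (40 * c) * e ^ 2 - (2 * c * e) ^ 2 := by nlinarith
    _ ≤ 2 * ((1 - q) * (1 - q')) * (1 - ((ρ : ℂ) * z).re) - ‖1 - ρ * z‖ ^ 2 := by
        gcongr
        linarith

end

/-- the claim in the proof of Theorem 1.5 of the paper.
Let `q, q' ∈ [0,1)`, `p = 1−q`, `p' = 1−q'`, `φ₁(w) = pw + q`,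
`φ₂(w) = p'w/(1 − q'w)`, and `Ψ = φ₁⁻¹ ∘ φ₂⁻¹`; explicitly
`Ψ(w) = (w/(p' + q'w) − q)/p`.  There is `c₂ ∈ (0, 1/20)` depending only on `q, q'`
such that for all sufficiently large `L`, with `ρ = 1 − 1/L²`: if `|z| = 1` and
`|arg z| ≤ c₂/L`, then `|Ψ(ρ·z)| ≤ 1 − c₂/L²`. -/
theorem moebius_contraction
    (q q' : ℝ) (hq0 : 0 ≤ q) (hq1 : q < 1) (hq'0 : 0 ≤ q') (hq'1 : q' < 1) :
    ∃ c₂ : ℝ, 0 < c₂ ∧ c₂ < 1 / 20 ∧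
      ∃ L₀ : ℝ, ∀ L : ℝ, L₀ ≤ L →
        ∀ z : ℂ, ‖z‖ = 1 → |Complex.arg z| ≤ c₂ / L →
          ‖(((((1 - 1 / (L : ℂ) ^ 2) * z) /
                ((1 - (q' : ℂ)) + (q' : ℂ) * ((1 - 1 / (L : ℂ) ^ 2) * z)) - (q : ℂ))
              / (1 - (q : ℂ))))‖
            ≤ 1 - c₂ / L ^ 2 := by
  have hu : 0 < (1 - q) * (1 - q') := mul_pos (sub_pos.2 hq1) (sub_pos.2 hq'1)
  have hu1 : (1 - q) * (1 - q') ≤ 1 := mul_le_one₀ (by linarith) (by linarith) (by linarith)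
  set c := (1 - q) * (1 - q') / 40 with hc_def
  have hc : 0 < c := by positivity
  refine ⟨c, hc, by linarith, 1 / c, fun L hL z hz harg => ?_⟩
  have hL0 : 0 < L := (one_div_pos.2 hc).trans_le hL
  have hρ : (1 - 1 / (L : ℂ) ^ 2) = ((1 - (1 / L) ^ 2 : ℝ) : ℂ) := by push_cast; ring
  rw [hρ, ← mul_one_div c (L ^ 2), ← one_div_pow]
  rw [← mul_one_div] at harg
  exact norm_moebiusPsi_ofReal_mul_le hq0 hq1.le hq'0 hq'1 (by linarith)
    (by positivity) ((one_div_le hL0 hc).2 hL) hz harg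
end

section
/- Let c_2 ∈ (0, 1/20), let L > 0, let d be a nonnegative integer with d ≤ L², and let (β_0, …, β_d) be a probability vector (β_j ≥ 0, Σβ_j = 1) whose mean γ = Σ_j j·β_j satisfies Σ_{j=0}^{d} β_j·|j − γ| ≤ L. Set ρ = 1 − 1/L², P(z) = Σ_{j=0}^{d} β_j z^j, and let z_0 = e^{iθ} with |θ| ≤ c_2/L. Then for all sufficiently large L (depending only on c_2): |P(1/(ρ·z_0))| ≥ 1/2. -/
/-!
Multiplying `P(1/(ρz₀))` by the unimodular factor `e^{iγθ}` turns its `j`-th term into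
`β_j ρ^{-j} e^{i(γ-j)θ}`, whose real part is at least `β_j (1 - ρ^{-d} |j - γ| |θ|)` because
`cos x ≥ 1 - |x|` and `1 ≤ ρ^{-j} ≤ ρ^{-d}`. Summing, the real part is at least
`1 - ρ^{-d} |θ| Σ_j β_j |j - γ| ≥ 1 - e² c₂`, since `ρ^{-d} ≤ e^{2d/L²} ≤ e²` and
`|θ| Σ_j β_j |j - γ| ≤ c₂`. As `e² < 10` and `c₂ < 1/20`, this is at least `1/2` once `L ≥ 2`.
-/

open Complex

lemma Real.one_sub_abs_le_cos (x : ℝ) : 1 - |x| ≤ Real.cos x := by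
  have h := Real.abs_cos_sub_cos_le x 0
  rw [Real.cos_zero, sub_zero] at h
  linarith [(abs_le.1 h).1]

lemma one_sub_mul_abs_le_mul_cos {a M : ℝ} (ha : 1 ≤ a) (haM : a ≤ M) (x : ℝ) :
    1 - M * |x| ≤ a * Real.cos x := by
  nlinarith [Real.one_sub_abs_le_cos x, abs_nonneg x]

lemma inv_one_sub_le_exp_two_mul {u : ℝ} (hu0 : 0 ≤ u) (hu : u ≤ 1 / 2) :
    (1 - u)⁻¹ ≤ Real.exp (2 * u) := by
  rw [inv_le_iff_one_le_mul₀' (by linarith)]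
  nlinarith [Real.add_one_le_exp (2 * u)]

lemma inv_one_sub_pow_le_exp_two {u : ℝ} (hu0 : 0 ≤ u) (hu : u ≤ 1 / 2) {d : ℕ}
    (hd : d * u ≤ 1) : (1 - u)⁻¹ ^ d ≤ Real.exp 2 :=
  calc (1 - u)⁻¹ ^ d ≤ Real.exp (2 * u) ^ d :=
        pow_le_pow_left₀ (inv_nonneg.2 (by linarith)) (inv_one_sub_le_exp_two_mul hu0 hu) d
    _ = Real.exp (2 * (d * u)) := by rw [← Real.exp_nat_mul]; ring_nf
    _ ≤ Real.exp 2 := Real.exp_le_exp.2 (by linarith)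

lemma one_div_mul_exp_pow (r θ : ℝ) (j : ℕ) :
    (1 / ((r : ℂ) * Complex.exp (θ * I))) ^ j
      = ((r⁻¹ ^ j : ℝ) : ℂ) * Complex.exp ((-(j * θ) : ℝ) * I) := by
  rw [one_div, mul_inv, ← Complex.exp_neg, mul_pow, ← Complex.exp_nat_mul]
  push_cast
  ring_nf

lemma re_exp_mul_sum_one_div_mul_exp_pow (s : Finset ℕ) (β : ℕ → ℝ) (r γ θ : ℝ) :
    (Complex.exp ((γ * θ : ℝ) * I) *
        ∑ j ∈ s, (β j : ℂ) * (1 / ((r : ℂ) * Complex.exp (θ * I))) ^ j).re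
      = ∑ j ∈ s, β j * r⁻¹ ^ j * Real.cos ((γ - j) * θ) := by
  rw [Finset.mul_sum, Complex.re_sum]
  refine Finset.sum_congr rfl fun j _ => ?_
  have hrot : Complex.exp ((γ * θ : ℝ) * I) *
        ((β j : ℂ) * (1 / ((r : ℂ) * Complex.exp (θ * I))) ^ j)
      = ((β j * r⁻¹ ^ j : ℝ) : ℂ) * Complex.exp (((γ - j) * θ : ℝ) * I) := by
    rw [one_div_mul_exp_pow, show (γ - j) * θ = γ * θ + -(j * θ) by ring, ofReal_add, add_mul,
      Complex.exp_add]
    push_cast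
    ring
  rw [hrot, Complex.re_ofReal_mul, Complex.exp_ofReal_mul_I_re]

lemma one_sub_mul_le_norm_sum_one_div_mul_exp_pow {s : Finset ℕ} {β : ℕ → ℝ}
    (hβ : ∀ j ∈ s, 0 ≤ β j) (hsum : ∑ j ∈ s, β j = 1) {r M : ℝ} (hr0 : 0 < r) (hr1 : r ≤ 1)
    (hM : ∀ j ∈ s, r⁻¹ ^ j ≤ M) (γ θ : ℝ) :
    1 - M * |θ| * ∑ j ∈ s, β j * |(j : ℝ) - γ|
      ≤ ‖∑ j ∈ s, (β j : ℂ) * (1 / ((r : ℂ) * Complex.exp (θ * I))) ^ j‖ := by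
  set S := ∑ j ∈ s, (β j : ℂ) * (1 / ((r : ℂ) * Complex.exp (θ * I))) ^ j
  have hr : 1 ≤ r⁻¹ := (one_le_inv₀ hr0).2 hr1
  calc 1 - M * |θ| * ∑ j ∈ s, β j * |(j : ℝ) - γ|
      = ∑ j ∈ s, β j * (1 - M * |(γ - j) * θ|) := by
        simp_rw [mul_sub, Finset.sum_sub_distrib, mul_one, hsum, Finset.mul_sum, abs_mul,
          abs_sub_comm γ]
        congr 1
        exact Finset.sum_congr rfl fun j _ => by ring
    _ ≤ ∑ j ∈ s, β j * r⁻¹ ^ j * Real.cos ((γ - j) * θ) := by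
        refine Finset.sum_le_sum fun j hj => ?_
        rw [mul_assoc]
        exact mul_le_mul_of_nonneg_left
          (one_sub_mul_abs_le_mul_cos (one_le_pow₀ hr) (hM j hj) _) (hβ j hj)
    _ = (Complex.exp ((γ * θ : ℝ) * I) * S).re :=
        (re_exp_mul_sum_one_div_mul_exp_pow s β r γ θ).symm
    _ ≤ ‖Complex.exp ((γ * θ : ℝ) * I) * S‖ := Complex.re_le_norm _
    _ = ‖S‖ := by rw [norm_mul, Complex.norm_exp_ofReal_mul_I, one_mul]

theorem shift_polynomial_lower_bound_general
    (c₂ : ℝ) (hc₂ : c₂ < 1 / 20) :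
    ∃ L₀ : ℝ, ∀ L : ℝ, L₀ ≤ L →
      ∀ d : ℕ, (d : ℝ) ≤ L ^ 2 →
      ∀ β : ℕ → ℝ, (∀ j, 0 ≤ β j) →
        (∑ j ∈ Finset.range (d + 1), β j) = 1 →
      ∀ γ : ℝ, γ = ∑ j ∈ Finset.range (d + 1), β j * j →
        (∑ j ∈ Finset.range (d + 1), β j * |(j : ℝ) - γ|) ≤ L →
      ∀ θ : ℝ, |θ| ≤ c₂ / L →
        (1 / 2 : ℝ) ≤
          ‖(∑ j ∈ Finset.range (d + 1),
            (β j : ℂ) *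
              (1 / (((1 - 1 / (L : ℂ) ^ 2)) * Complex.exp (θ * Complex.I))) ^ j)‖ := by
  refine ⟨2, fun L hL d hd β hβ hsum γ _ hdev θ hθ => ?_⟩
  have hL0 : 0 < L := by linarith
  set u := 1 / L ^ 2 with hu_def
  have hu0 : 0 ≤ u := by positivity
  have hu : u ≤ 1 / 2 := by rw [hu_def, div_le_div_iff₀ (by positivity) two_pos]; nlinarith
  have hM : ∀ j ∈ Finset.range (d + 1), (1 - u)⁻¹ ^ j ≤ Real.exp 2 := fun j hj => by
    refine inv_one_sub_pow_le_exp_two hu0 hu ?_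
    have hjd : (j : ℝ) ≤ d := by exact_mod_cast Nat.lt_succ_iff.1 (Finset.mem_range.1 hj)
    rw [hu_def, mul_one_div, div_le_one (by positivity)]
    linarith
  have hθdev : |θ| * ∑ j ∈ Finset.range (d + 1), β j * |(j : ℝ) - γ| ≤ c₂ :=
    calc _ ≤ c₂ / L * L := mul_le_mul hθ hdev
            (Finset.sum_nonneg fun j _ => mul_nonneg (hβ j) (abs_nonneg _))
            ((abs_nonneg θ).trans hθ)
      _ = c₂ := div_mul_cancel₀ c₂ hL0.ne'
  have hexp2 : Real.exp 2 < 10 := by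
    rw [show (2 : ℝ) = 1 + 1 by norm_num, Real.exp_add]
    nlinarith [Real.exp_one_lt_d9, Real.exp_pos 1]
  have hbase : (1 - 1 / (L : ℂ) ^ 2) = ((1 - u : ℝ) : ℂ) := by rw [hu_def]; push_cast; ring
  rw [hbase]
  refine le_trans ?_ (one_sub_mul_le_norm_sum_one_div_mul_exp_pow (fun j _ => hβ j) hsum
    (by linarith) (by linarith) hM γ θ)
  nlinarith [Real.exp_pos 2, abs_nonneg θ]

/-- the estimate `|P(1/(ρz₀))| ≥ 1/2` from the proof of
Theorem 1.5 of the paper.  Let `c₂ ∈ (0, 1/20)`, `d ≤ L²`, let `(β_0,…,β_d)` be a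
probability vector whose mean `γ` satisfies `Σ_j β_j|j − γ| ≤ L`, let
`ρ = 1 − 1/L²`, `P(z) = Σ_{j=0}^d β_j z^j` and `z₀ = e^{iθ}` with `|θ| ≤ c₂/L`.
Then for all sufficiently large `L` (depending only on `c₂`):
`|P(1/(ρ·z₀))| ≥ 1/2`. -/
theorem shift_polynomial_lower_bound
    (c₂ : ℝ) (hc₂0 : 0 < c₂) (hc₂ : c₂ < 1 / 20) :
    ∃ L₀ : ℝ, ∀ L : ℝ, L₀ ≤ L →
      ∀ d : ℕ, (d : ℝ) ≤ L ^ 2 →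
      ∀ β : ℕ → ℝ, (∀ j, 0 ≤ β j) →
        (∑ j ∈ Finset.range (d + 1), β j) = 1 →
      ∀ γ : ℝ, γ = ∑ j ∈ Finset.range (d + 1), β j * j →
        (∑ j ∈ Finset.range (d + 1), β j * |(j : ℝ) - γ|) ≤ L →
      ∀ θ : ℝ, |θ| ≤ c₂ / L →
        (1 / 2 : ℝ) ≤
          ‖(∑ j ∈ Finset.range (d + 1),
            (β j : ℂ) *
              (1 / (((1 - 1 / (L : ℂ) ^ 2)) * Complex.exp (θ * Complex.I))) ^ j)‖ :=
  shift_polynomial_lower_bound_general c₂ hc₂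
end

section
/- Assume q' = q. Fix ε > 0 and constants C_align, C_false ≥ 1, and let C_RW > 0 be a constant such that for every stopping time τ with respect to {G'_j} and all a ≥ 1, j ≥ 1, P_x[|g(τ+j) − g(τ) − j| ≥ a | τ < ∞] ≤ exp(−C_RW·a²/j). Let k_* ∈ ℕ and let τ_2 be a stopping time with respect to the filtration {G'_j} satisfying P_x[∞ > |g(τ_2) − k_*| > C_align·log^{1/3} n] ≤ exp(−C_false·log^{1/3} n). Set s = ⌊log^{4/9} n⌋ and let E_1 be the event {k_* ≤ g(τ_2 + s) ≤ k_* + ε·log^{2/3} n}. Then for all sufficiently large n (depending on ε, C_align, C_false, C_RW): P_x[{τ_2 < ∞} ∩ E_1^c] ≤ 2·exp(−C_false·log^{1/3} n). -/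
open MeasureTheory ProbabilityTheory Real Filter Set
open scoped ENNReal NNReal

noncomputable section

namespace TraceRec

/-- The effective deletion probability `a = q(1-q')/(1-qq')` in the inductive
construction of the deletion-insertion channel. -/
def pA (q q' : ℝ) : ℝ := q * (1 - q') / (1 - q * q')

/-- The effective insertion probability `b = q'(1-q)/(1-qq')`. -/
def pB (q q' : ℝ) : ℝ := q' * (1 - q) / (1 - q * q')

/-- The pair `(s m, s' m)` of input/output pointers of the channel after `m` steps,
as a function of the channel randomness `ω`. -/
def SS (q q' : ℝ) (ω : ℕ → ℝ) : ℕ → ℕ × ℕ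
  | 0 => (0, 0)
  | m + 1 =>
    let p := SS q q' ω m
    if ω m ≤ pA q q' then (p.1 + 1, p.2)
    else if ω m ≤ pA q q' + pB q q' then (p.1, p.2 + 1)
    else (p.1 + 1, p.2 + 1)

/-- Step `m` is a copy step. -/
def IsCopy (q q' : ℝ) (ω : ℕ → ℝ) (m : ℕ) : Prop := pA q q' + pB q q' < ω m

/-- `ψ j`: the step of the construction at which the `j`-th output bit is produced
(the largest `t` with `s'(t) = j`). -/
def psi (q q' : ℝ) (ω : ℕ → ℝ) (j : ℕ) : ℕ := sSup {t | (SS q q' ω t).2 = j}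

/-- The trace `x̃` of the input string `x`, built from the channel randomness `ω`:
the `j`-th output bit. -/
def trace (q q' : ℝ) (x : ℕ → Bool) (ω : ℕ → ℝ) (j : ℕ) : Bool :=
  let m := sInf {m | (SS q q' ω (m + 1)).2 = j + 1}
  if pA q q' + pB q q' < ω m then x (SS q q' ω m).1
  else if pA q q' + pB q q' / 2 < ω m then true
  else false

/-- `f(k)`: the location in the trace of the first bit of `x(k:∞)` preserved by the
channel. -/
def fpos (q q' : ℝ) (ω : ℕ → ℝ) (k : ℕ) : ℕ :=
  (SS q q' ω (sInf {m | IsCopy q q' ω m ∧ k ≤ (SS q q' ω m).1})).2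

/-- `g(k')`: the location in `x` of the first bit of `x̃(k':∞)` that was copied from
`x`. -/
def gpos (q q' : ℝ) (ω : ℕ → ℝ) (k' : ℕ) : ℕ :=
  (SS q q' ω (sInf {m | IsCopy q q' ω m ∧ k' ≤ (SS q q' ω m).2})).1

/-- `h(j)`: the last bit of `x` examined by the time `x̃_j` is produced. -/
def hpos (q q' : ℝ) (ω : ℕ → ℝ) (j : ℕ) : ℕ :=
  (SS q q' ω (psi q q' ω j + 1)).1 - 1

/-- `U` is the product of uniform measures on `[0,1]`: it gives independent
uniform `[0,1]` coordinates.  (Characterization by finite-dimensional cylinders.) -/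
def IsUnifProd (U : Measure (ℕ → ℝ)) : Prop :=
  IsProbabilityMeasure U ∧
    ∀ (n : ℕ) (s : Fin n → Set ℝ), (∀ i, MeasurableSet (s i)) →
      U {ω | ∀ i : Fin n, ω i.val ∈ s i} = ∏ i, volume (s i ∩ Set.Icc (0:ℝ) 1)

/-- `μ` is the law of an i.i.d. sequence of Bernoulli(1/2) bits. -/
def IsBernoulliHalfProd (μ : Measure (ℕ → Bool)) : Prop :=
  IsProbabilityMeasure μ ∧
    ∀ (n : ℕ) (b : Fin n → Bool), μ {x | ∀ i : Fin n, x i.val = b i} = (1 / 2) ^ n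

/-- The sample space `Ω = {0,1}^ℕ × [0,1]^ℕ`. -/
abbrev Om : Type := (ℕ → Bool) × (ℕ → ℝ)

/-- `P_x = δ_x × U`. -/
def Px (U : Measure (ℕ → ℝ)) (x : ℕ → Bool) : Measure Om :=
  (Measure.dirac x).prod U

/-- The σ-field `G'_j` on `Ω`, generated by `x` and `{ω t : t ≤ ψ(j)}`. -/
def Gp (q q' : ℝ) (j : ℕ) : MeasurableSpace Om :=
  MeasurableSpace.comap
    (fun p => (p.1, fun t => if t ≤ psi q q' p.2 j then p.2 t else 0)) inferInstance

/-- `τ` is a (possibly infinite) stopping time with respect to the filtration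
`{G'_j}`. -/
def IsStopTime (q q' : ℝ) (τ : Om → ℕ∞) : Prop :=
  ∀ j : ℕ, MeasurableSet[Gp q q' j] {p | τ p ≤ (j : ℕ∞)}

/-- Evaluation of the finite part of a `ℕ∞`-valued time. -/
def tnat (n : ℕ∞) : ℕ := n.toNat

end TraceRec

open TraceRec

/-! On `{τ₂ < ∞}`, if `g(τ₂)` lies within `C_align log^{1/3} n` of `k_*` while `g(τ₂ + s)` leaves
the window `[k_*, k_* + ε log^{2/3} n]`, then the increment `g(τ₂ + s) - g(τ₂)` misses its mean `s`
by at least `s / 2`, because `log^{1/3} n ≪ s ≈ log^{4/9} n ≪ log^{2/3} n`. The first event is the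
false-positive event; the random-walk bound with `a = s / 2`, `j = s` makes the second one cost at
most `exp(-C_RW s / 4) ≤ exp(-C_false log^{1/3} n)`, and a union bound gives the factor `2`. -/

lemma measure_inter_le_cond {Ω : Type*} [MeasurableSpace Ω] (μ : Measure Ω)
    [IsZeroOrProbabilityMeasure μ] (s t : Set Ω) : μ (s ∩ t) ≤ μ[t | s] :=
  calc μ (s ∩ t) ≤ (μ s)⁻¹ * μ (s ∩ t) :=
        le_mul_of_one_le_left' (ENNReal.one_le_inv.2 prob_le_one)
    _ ≤ (μ s)⁻¹ * μ.restrict s t :=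
        mul_le_mul_right (inter_comm s t ▸ Measure.le_restrict_apply s t) _
    _ = μ[t | s] := rfl

lemma isProbabilityMeasure_Px {U : Measure (ℕ → ℝ)} [IsProbabilityMeasure U] (x : ℕ → Bool) :
    IsProbabilityMeasure (Px U x) := by
  unfold Px
  infer_instance

lemma half_le_abs_sub_of_notMem_Icc {k g₀ g₁ s A B : ℝ} (hA : A ≤ s / 2)
    (hB : A + 3 * s / 2 ≤ B) (h₀ : |g₀ - k| ≤ A) (h₁ : g₁ ∉ Icc k (k + B)) :
    s / 2 ≤ |g₁ - g₀ - s| := by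
  rw [abs_le] at h₀
  rw [mem_Icc, not_and_or, not_le, not_le] at h₁
  rw [le_abs]
  rcases h₁ with h₁ | h₁
  · right; linarith
  · left; linarith

lemma scale_inequalities {Ca Cf CRW ε u s : ℝ} (hCRW : 0 ≤ CRW) (hu : 2 ≤ u) (hCa : 4 * Ca ≤ u)
    (hε : 2 ≤ ε * u) (hCf : 8 * Cf ≤ CRW * u) (hs : u ^ 4 - 1 ≤ s) (hs' : s ≤ u ^ 4) :
    2 ≤ s ∧ Ca * u ^ 3 ≤ s / 2 ∧ Ca * u ^ 3 + 3 * s / 2 ≤ ε * u ^ 6 ∧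
      Cf * u ^ 3 ≤ CRW * s / 4 := by
  have hu4 : 16 ≤ u ^ 4 := by nlinarith [pow_le_pow_left₀ (by norm_num) hu 4]
  have hu3 : 0 ≤ u ^ 3 := by positivity
  have hCa' : Ca * u ^ 3 ≤ u ^ 4 / 4 := by nlinarith
  refine ⟨by linarith, by linarith, ?_, ?_⟩
  · have : 2 * u ^ 4 ≤ ε * u ^ 6 := by nlinarith [pow_le_pow_left₀ (by norm_num) hu 5]
    linarith
  · nlinarith

lemma eventually_scale_inequalities (Ca Cf : ℝ) {CRW ε : ℝ} (hCRW : 0 < CRW) (hε : 0 < ε) :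
    ∀ᶠ t : ℝ in atTop,
      2 ≤ (⌊t ^ ((4 : ℝ) / 9)⌋₊ : ℝ) ∧
      Ca * t ^ ((1 : ℝ) / 3) ≤ ⌊t ^ ((4 : ℝ) / 9)⌋₊ / 2 ∧
      Ca * t ^ ((1 : ℝ) / 3) + 3 * ⌊t ^ ((4 : ℝ) / 9)⌋₊ / 2 ≤ ε * t ^ ((2 : ℝ) / 3) ∧
      Cf * t ^ ((1 : ℝ) / 3) ≤ CRW * ⌊t ^ ((4 : ℝ) / 9)⌋₊ / 4 := by
  have hlarge : ∀ᶠ u : ℝ in atTop, 2 ≤ u ∧ 4 * Ca ≤ u ∧ 2 ≤ ε * u ∧ 8 * Cf ≤ CRW * u :=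
    (eventually_ge_atTop 2).and <| (eventually_ge_atTop _).and <|
      ((tendsto_id.const_mul_atTop hε).eventually_ge_atTop 2).and
        ((tendsto_id.const_mul_atTop hCRW).eventually_ge_atTop _)
  filter_upwards [(tendsto_rpow_atTop (by norm_num : (0 : ℝ) < 1 / 9)).eventually hlarge,
    eventually_ge_atTop 0] with t ⟨hu, hCa, hε', hCf⟩ ht
  have hpow : ∀ k : ℕ, t ^ ((k : ℝ) / 9) = (t ^ ((1 : ℝ) / 9)) ^ k := fun k => by
    rw [← rpow_natCast, ← rpow_mul ht]
    ring_nf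
  have h3 : t ^ ((1 : ℝ) / 3) = (t ^ ((1 : ℝ) / 9)) ^ 3 := by rw [← hpow]; norm_num
  have h4 : t ^ ((4 : ℝ) / 9) = (t ^ ((1 : ℝ) / 9)) ^ 4 := by rw [← hpow]; norm_num
  have h6 : t ^ ((2 : ℝ) / 3) = (t ^ ((1 : ℝ) / 9)) ^ 6 := by rw [← hpow]; norm_num
  rw [h3, h6]
  refine scale_inequalities hCRW.le hu hCa hε' hCf ?_ ?_
  · rw [← h4]; exact (Nat.sub_one_lt_floor _).le
  · rw [← h4]; exact Nat.floor_le (by positivity)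

theorem alignment_farther_out_general
    (q : ℝ)
    (U : Measure (ℕ → ℝ)) (hU : IsUnifProd U)
    (ε : ℝ) (hε : 0 < ε)
    (Calign Cfalse : ℝ)
    (CRW : ℝ) (hCRW : 0 < CRW)
    (hRW : ∀ τ : Om → ℕ∞, IsStopTime q q τ →
      ∀ x : ℕ → Bool, ∀ a : ℝ, 1 ≤ a → ∀ j : ℕ, 1 ≤ j →
        (Px U x)[{p : Om |
            a ≤ |(gpos q q p.2 (tnat (τ p) + j) : ℝ)
                  - (gpos q q p.2 (tnat (τ p)) : ℝ) - (j : ℝ)|}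
          | {p : Om | τ p ≠ ⊤}]
          ≤ ENNReal.ofReal (Real.exp (-CRW * a ^ 2 / j))) :
    ∃ n₀ : ℕ, ∀ n : ℕ, n₀ ≤ n →
    ∀ x : ℕ → Bool, ∀ kstar : ℕ, ∀ τ₂ : Om → ℕ∞, IsStopTime q q τ₂ →
      ((Px U x) {p : Om | τ₂ p ≠ ⊤ ∧
          Calign * Real.log n ^ ((1 : ℝ) / 3)
            < |(gpos q q p.2 (tnat (τ₂ p)) : ℝ) - (kstar : ℝ)|}
        ≤ ENNReal.ofReal (Real.exp (-Cfalse * Real.log n ^ ((1 : ℝ) / 3)))) →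
      (Px U x) ({p : Om | τ₂ p ≠ ⊤} ∩
          {p : Om | ¬ ((kstar : ℝ) ≤
              (gpos q q p.2 (tnat (τ₂ p) + ⌊Real.log n ^ ((4 : ℝ) / 9)⌋₊) : ℝ) ∧
            (gpos q q p.2 (tnat (τ₂ p) + ⌊Real.log n ^ ((4 : ℝ) / 9)⌋₊) : ℝ)
              ≤ (kstar : ℝ) + ε * Real.log n ^ ((2 : ℝ) / 3))})
        ≤ ENNReal.ofReal (2 * Real.exp (-Cfalse * Real.log n ^ ((1 : ℝ) / 3))) := by
  have := hU.1
  obtain ⟨n₀, hn₀⟩ := eventually_atTop.mp <|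
    (tendsto_log_atTop.comp tendsto_natCast_atTop_atTop).eventually
      (eventually_scale_inequalities Calign Cfalse hCRW hε)
  simp only [Function.comp_apply] at hn₀
  refine ⟨n₀, fun n hn x kstar τ₂ hτ₂ hfalse => ?_⟩
  obtain ⟨hs, hA, hB, hC⟩ := hn₀ n hn
  have := isProbabilityMeasure_Px (U := U) x
  set t := Real.log n
  set s := ⌊t ^ ((4 : ℝ) / 9)⌋₊
  set bound := ENNReal.ofReal (Real.exp (-Cfalse * t ^ ((1 : ℝ) / 3)))
  set far : Set Om := {p | τ₂ p ≠ ⊤ ∧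
    Calign * t ^ ((1 : ℝ) / 3) < |(gpos q q p.2 (tnat (τ₂ p)) : ℝ) - (kstar : ℝ)|}
  set drift : Set Om := {p | (s : ℝ) / 2 ≤
    |(gpos q q p.2 (tnat (τ₂ p) + s) : ℝ) - (gpos q q p.2 (tnat (τ₂ p)) : ℝ) - (s : ℝ)|}
  have hdrift : Px U x ({p | τ₂ p ≠ ⊤} ∩ drift) ≤ bound := by
    refine (measure_inter_le_cond _ _ _).trans <|
      (hRW τ₂ hτ₂ x _ (by linarith) s (by exact_mod_cast (by linarith : (1 : ℝ) ≤ s))).trans <|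
      ENNReal.ofReal_le_ofReal (exp_le_exp.2 ?_)
    have : CRW * ((s : ℝ) / 2) ^ 2 / s = CRW * s / 4 := by field_simp; ring
    rw [neg_mul, neg_mul, neg_div, this]
    linarith
  calc _ ≤ Px U x (far ∪ ({p | τ₂ p ≠ ⊤} ∩ drift)) := by
        refine measure_mono fun p ⟨hfin, hout⟩ => ?_
        by_cases hfar : p ∈ far
        · exact Or.inl hfar
        · exact Or.inr ⟨hfin, half_le_abs_sub_of_notMem_Icc hA hB
            (not_lt.1 fun h => hfar ⟨hfin, h⟩) hout⟩
    _ ≤ Px U x far + Px U x ({p | τ₂ p ≠ ⊤} ∩ drift) := measure_union_le _ _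
    _ ≤ bound + bound := add_le_add hfalse hdrift
    _ = _ := by rw [two_mul, ENNReal.ofReal_add (exp_nonneg _) (exp_nonneg _)]

/-- Corollary 2.4 of the paper: alignment farther out.
Assume `q' = q`.  Fix `ε > 0`, constants `C_align, C_false ≥ 1` and `C_RW > 0`
satisfying the random-walk tail bound for all stopping times.  Let `τ₂` be a
stopping time with false-positive bound
`P_x[∞ > |g(τ₂) − k_*| > C_align log^{1/3} n] ≤ exp(−C_false log^{1/3} n)`.
With `s = ⌊log^{4/9} n⌋` and `E₁ = {k_* ≤ g(τ₂+s) ≤ k_* + ε log^{2/3} n}`, for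
all sufficiently large `n`:
`P_x[{τ₂ < ∞} ∩ E₁ᶜ] ≤ 2·exp(−C_false·log^{1/3} n)`. -/
theorem alignment_farther_out
    (q : ℝ) (hq0 : 0 ≤ q) (hq1 : q < 1)
    (U : Measure (ℕ → ℝ)) (hU : IsUnifProd U)
    (ε : ℝ) (hε : 0 < ε)
    (Calign Cfalse : ℝ) (hCa : 1 ≤ Calign) (hCf : 1 ≤ Cfalse)
    (CRW : ℝ) (hCRW : 0 < CRW)
    (hRW : ∀ τ : Om → ℕ∞, IsStopTime q q τ →
      ∀ x : ℕ → Bool, ∀ a : ℝ, 1 ≤ a → ∀ j : ℕ, 1 ≤ j →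
        (Px U x)[{p : Om |
            a ≤ |(gpos q q p.2 (tnat (τ p) + j) : ℝ)
                  - (gpos q q p.2 (tnat (τ p)) : ℝ) - (j : ℝ)|}
          | {p : Om | τ p ≠ ⊤}]
          ≤ ENNReal.ofReal (Real.exp (-CRW * a ^ 2 / j))) :
    ∃ n₀ : ℕ, ∀ n : ℕ, n₀ ≤ n →
    ∀ x : ℕ → Bool, ∀ kstar : ℕ, ∀ τ₂ : Om → ℕ∞, IsStopTime q q τ₂ →
      ((Px U x) {p : Om | τ₂ p ≠ ⊤ ∧
          Calign * Real.log n ^ ((1 : ℝ) / 3)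
            < |(gpos q q p.2 (tnat (τ₂ p)) : ℝ) - (kstar : ℝ)|}
        ≤ ENNReal.ofReal (Real.exp (-Cfalse * Real.log n ^ ((1 : ℝ) / 3)))) →
      (Px U x) ({p : Om | τ₂ p ≠ ⊤} ∩
          {p : Om | ¬ ((kstar : ℝ) ≤
              (gpos q q p.2 (tnat (τ₂ p) + ⌊Real.log n ^ ((4 : ℝ) / 9)⌋₊) : ℝ) ∧
            (gpos q q p.2 (tnat (τ₂ p) + ⌊Real.log n ^ ((4 : ℝ) / 9)⌋₊) : ℝ)
              ≤ (kstar : ℝ) + ε * Real.log n ^ ((2 : ℝ) / 3))})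
        ≤ ENNReal.ofReal (2 * Real.exp (-Cfalse * Real.log n ^ ((1 : ℝ) / 3))) :=
  alignment_farther_out_general q U hU ε hε Calign Cfalse CRW hCRW hRW
end
end
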